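/- Let X and Y be complex Banach spaces, B ∈ B(Y), C ∈ B(Y, X), and let M_C ∈ B(X ⊕ Y) be the upper-triangular operator matrix with A = 0, i.e. M_C(x, y) = (Cy, By). Then M_C has finite ascent if and only if B has finite ascent. -/

import Mathlib

/-!
Finite ascent means the kernels of all powers lie in a single one of them. Since
`M_C^(n+1) (x, y) = (C (B^n y), B^(n+1) y)`, the kernels of the powers of `M_C` are squeezed between
those of `B`: `ker M_C^n ⊆ X × ker B^n ⊆ ker M_C^(n+1)`, so one chain is bounded iff the other is.
-/

noncomputable section

open ContinuousLinearMap Metric Set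

variable {E : Type*} [NormedAddCommGroup E] [NormedSpace ℂ E]
variable {X Y : Type*} [NormedAddCommGroup X] [NormedSpace ℂ X] [CompleteSpace X]
  [NormedAddCommGroup Y] [NormedSpace ℂ Y] [CompleteSpace Y]

/-- `T` has finite ascent: some power has the same kernel as the next one. -/
def HasFiniteAscent (T : E →L[ℂ] E) : Prop :=
  ∃ k : ℕ, LinearMap.ker ((T ^ k : E →L[ℂ] E) : E →ₗ[ℂ] E) = LinearMap.ker ((T ^ (k + 1) : E →L[ℂ] E) : E →ₗ[ℂ] E)

/-- The upper-triangular operator matrix `M_C (x, y) = (A x + C y, B y)` on `X ⊕ Y`. -/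
def ucMat (A : X →L[ℂ] X) (B : Y →L[ℂ] Y) (C : Y →L[ℂ] X) :
    (X × Y) →L[ℂ] (X × Y) :=
  (A.comp (ContinuousLinearMap.fst ℂ X Y) + C.comp (ContinuousLinearMap.snd ℂ X Y)).prod
    (B.comp (ContinuousLinearMap.snd ℂ X Y))

namespace Module.End

open LinearMap

variable {R M : Type*} [Semiring R] [AddCommMonoid M] [Module R M]

theorem ker_pow_le_ker_pow_of_le (f : End R M) {m n : ℕ} (h : m ≤ n) :
    ker (f ^ m) ≤ ker (f ^ n) := by
  rw [← Nat.sub_add_cancel h, pow_add]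
  exact ker_le_ker_comp _ _

theorem exists_ker_pow_eq_ker_pow_succ_iff {K V : Type*} [DivisionRing K] [AddCommGroup V]
    [Module K V] (f : End K V) :
    (∃ k, ker (f ^ k) = ker (f ^ (k + 1))) ↔ ∃ k, ∀ m, ker (f ^ m) ≤ ker (f ^ k) := by
  constructor
  · rintro ⟨k, hk⟩
    refine ⟨k, fun m => ?_⟩
    rcases le_total m k with hmk | hkm
    · exact f.ker_pow_le_ker_pow_of_le hmk
    · rw [← Nat.add_sub_cancel' hkm, ← ker_pow_constant hk]
  · rintro ⟨k, hk⟩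
    exact ⟨k, le_antisymm (f.ker_pow_le_ker_pow_of_le k.le_succ) (hk (k + 1))⟩

end Module.End

theorem hasFiniteAscent_iff_exists_forall_ker_pow_le (T : E →L[ℂ] E) :
    HasFiniteAscent T ↔
      ∃ k, ∀ m, LinearMap.ker ((T ^ m : E →L[ℂ] E) : E →ₗ[ℂ] E) ≤
        LinearMap.ker ((T ^ k : E →L[ℂ] E) : E →ₗ[ℂ] E) := by
  simp only [HasFiniteAscent, toLinearMap_pow]
  exact Module.End.exists_ker_pow_eq_ker_pow_succ_iff _

section OperatorMatrix

variable {X Y : Type*} [NormedAddCommGroup X] [NormedSpace ℂ X] [NormedAddCommGroup Y]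
  [NormedSpace ℂ Y]

theorem ucMat_apply (A : X →L[ℂ] X) (B : Y →L[ℂ] Y) (C : Y →L[ℂ] X) (v : X × Y) :
    ucMat A B C v = (A v.1 + C v.2, B v.2) :=
  rfl

theorem ucMat_pow_apply_snd (A : X →L[ℂ] X) (B : Y →L[ℂ] Y) (C : Y →L[ℂ] X) (n : ℕ)
    (v : X × Y) : ((ucMat A B C ^ n) v).2 = (B ^ n) v.2 := by
  induction n with
  | zero => rfl
  | succ n ih => rw [pow_succ', mul_apply_eq_comp, ucMat_apply, ih, pow_succ', mul_apply_eq_comp]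

theorem ucMat_zero_pow_succ_apply (B : Y →L[ℂ] Y) (C : Y →L[ℂ] X) (n : ℕ) (v : X × Y) :
    (ucMat 0 B C ^ (n + 1)) v = (C ((B ^ n) v.2), (B ^ (n + 1)) v.2) := by
  rw [pow_succ', mul_apply_eq_comp, ucMat_apply, ucMat_pow_apply_snd, pow_succ' B,
    mul_apply_eq_comp, zero_apply, zero_add]

end OperatorMatrix

theorem stmt3 (B : Y →L[ℂ] Y) (C : Y →L[ℂ] X) :
    HasFiniteAscent (ucMat (0 : X →L[ℂ] X) B C) ↔ HasFiniteAscent B := by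
  simp only [hasFiniteAscent_iff_exists_forall_ker_pow_le, SetLike.le_def, LinearMap.mem_ker,
    coe_coe]
  constructor
  · rintro ⟨k, hk⟩
    refine ⟨k, fun m y hy => ?_⟩
    have hM : (ucMat 0 B C ^ (m + 1)) (0, y) = 0 := by
      rw [ucMat_zero_pow_succ_apply, pow_succ', mul_apply_eq_comp]
      simp [hy]
    rw [← ucMat_pow_apply_snd 0 B C k (0, y), hk (m + 1) hM]
    rfl
  · rintro ⟨k, hk⟩
    refine ⟨k + 1, fun m v hv => ?_⟩
    have hB : (B ^ k) v.2 = 0 := hk m (by rw [← ucMat_pow_apply_snd 0 B C, hv]; rfl)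
    rw [ucMat_zero_pow_succ_apply, pow_succ', mul_apply_eq_comp, hB, map_zero, map_zero]
    rfl
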